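/- If n is an odd positive integer, then the set of odd integers strictly between 0 and n/3 is a 3-free set in Z_n; hence s(Z_n, 3) ≥ ⌊n/6⌋ for odd n. -/

import Mathlib

/-!
Lift a putative solution from `ZMod n` to ℕ. Each representative is odd and below `n / 3`, so a
sum of at most three of them is below `n`, and the equation already holds in ℕ. There, parity
forces both sides to have the same number of terms, i.e. one term each (a sum of two positive
terms cannot vanish), and the two terms are equal.
-/

/-- `S` is a `t`-free set in the additive abelian group `G`: whenever a sum of `k`
elements of `S` equals a sum of `l` elements of `S` with `k + l ≤ t`, the two
multisets of terms coincide (in particular `k = l`). -/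
def IsTFreeSet {G : Type*} [AddCommGroup G] (t : ℕ) (S : Set G) : Prop :=
  ∀ A B : Multiset G, (∀ x ∈ A, x ∈ S) → (∀ x ∈ B, x ∈ S) →
    Multiset.card A + Multiset.card B ≤ t → A.sum = B.sum → A = B

namespace Multiset

theorem exists_map_eq_of_forall_mem_image {α β : Type*} {f : β → α} {T : Set β}
    {A : Multiset α} (h : ∀ x ∈ A, x ∈ f '' T) :
    ∃ A' : Multiset β, (∀ y ∈ A', y ∈ T) ∧ A'.map f = A := by
  induction A using Multiset.induction_on with
  | empty => exact ⟨0, by simp, rfl⟩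
  | cons a A ih =>
    obtain ⟨b, hbT, rfl⟩ := h a (mem_cons_self a A)
    obtain ⟨A', hA'T, rfl⟩ := ih fun x hx => h x (mem_cons_of_mem hx)
    refine ⟨b ::ₘ A', fun y hy => ?_, map_cons f b A'⟩
    rcases mem_cons.1 hy with rfl | hy
    exacts [hbT, hA'T y hy]

theorem sum_lt_of_card_le {t n : ℕ} (hn : 0 < n) {A : Multiset ℕ} (hcard : card A ≤ t)
    (h : ∀ k ∈ A, t * k < n) : A.sum < n := by
  rcases eq_or_ne A 0 with rfl | hA
  · simpa using hn
  refine Nat.lt_of_mul_lt_mul_left (a := t) ?_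
  calc t * A.sum = (A.map (t * ·)).sum := by rw [sum_map_mul_left, map_id']
    _ < (A.map fun _ => n).sum := sum_lt_sum_of_nonempty hA h
    _ = card A * n := by simp
    _ ≤ t * n := Nat.mul_le_mul_right n hcard

theorem sum_mod_two_eq_card_mod_two {A : Multiset ℕ} (h : ∀ k ∈ A, k % 2 = 1) :
    A.sum % 2 = card A % 2 := by
  induction A using Multiset.induction_on with
  | empty => rfl
  | cons a A ih =>
    have ha := h a (mem_cons_self a A)
    have hA := ih fun k hk => h k (mem_cons_of_mem hk)
    simp only [sum_cons, card_cons]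
    omega

theorem eq_zero_of_sum_eq_zero_of_forall_mod_two_eq_one {A : Multiset ℕ}
    (h : ∀ k ∈ A, k % 2 = 1) (hsum : A.sum = 0) : A = 0 :=
  eq_zero_of_forall_notMem fun k hk => by
    have := sum_eq_zero_iff.1 hsum k hk
    have := h k hk
    omega

/-- The odd natural numbers form a `3`-free set. -/
theorem eq_of_sum_eq_of_forall_mod_two_eq_one {A B : Multiset ℕ} (hA : ∀ k ∈ A, k % 2 = 1)
    (hB : ∀ k ∈ B, k % 2 = 1) (hcard : card A + card B ≤ 3) (hsum : A.sum = B.sum) :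
    A = B := by
  have hparity : card A % 2 = card B % 2 := by
    rw [← sum_mod_two_eq_card_mod_two hA, ← sum_mod_two_eq_card_mod_two hB, hsum]
  rcases Nat.eq_zero_or_pos (card A) with hA0 | hApos
  · rw [card_eq_zero.1 hA0, sum_zero] at hsum
    rw [card_eq_zero.1 hA0, eq_zero_of_sum_eq_zero_of_forall_mod_two_eq_one hB hsum.symm]
  rcases Nat.eq_zero_or_pos (card B) with hB0 | hBpos
  · rw [card_eq_zero.1 hB0, sum_zero] at hsum
    rw [card_eq_zero.1 hB0, eq_zero_of_sum_eq_zero_of_forall_mod_two_eq_one hA hsum]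
  obtain ⟨a, rfl⟩ := card_eq_one.1 (by omega : card A = 1)
  obtain ⟨b, rfl⟩ := card_eq_one.1 (by omega : card B = 1)
  simpa using hsum

end Multiset

def oddBelowThird (n : ℕ) : Finset ℕ :=
  (Finset.range n).filter fun k => k % 2 = 1 ∧ 3 * k < n

theorem mem_oddBelowThird {n k : ℕ} : k ∈ oddBelowThird n ↔ k % 2 = 1 ∧ 3 * k < n := by
  simp only [oddBelowThird, Finset.mem_filter, Finset.mem_range, and_iff_right_iff_imp]
  omega

theorem isTFreeSet_three_oddBelowThird {n : ℕ} (hn : 0 < n) :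
    IsTFreeSet 3 (↑((oddBelowThird n).image (Nat.cast : ℕ → ZMod n)) : Set (ZMod n)) := by
  intro A B hA hB hcard hsum
  simp only [Finset.coe_image] at hA hB
  obtain ⟨A, hAodd, rfl⟩ := Multiset.exists_map_eq_of_forall_mem_image hA
  obtain ⟨B, hBodd, rfl⟩ := Multiset.exists_map_eq_of_forall_mem_image hB
  simp only [Finset.mem_coe, mem_oddBelowThird] at hAodd hBodd
  rw [Multiset.card_map, Multiset.card_map] at hcard
  rw [← Nat.cast_multiset_sum, ← Nat.cast_multiset_sum] at hsum
  have hAsum : A.sum < n := Multiset.sum_lt_of_card_le hn (by omega) fun k hk => (hAodd k hk).2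
  have hBsum : B.sum < n := Multiset.sum_lt_of_card_le hn (by omega) fun k hk => (hBodd k hk).2
  have hsumℕ : A.sum = B.sum := by
    have := congrArg ZMod.val hsum
    rwa [ZMod.val_cast_of_lt hAsum, ZMod.val_cast_of_lt hBsum] at this
  rw [Multiset.eq_of_sum_eq_of_forall_mod_two_eq_one (fun k hk => (hAodd k hk).1)
    (fun k hk => (hBodd k hk).1) hcard hsumℕ]

theorem div_six_le_card_oddBelowThird (n : ℕ) : n / 6 ≤ (oddBelowThird n).card :=
  calc n / 6 = (Finset.range (n / 6)).card := (Finset.card_range _).symm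
    _ ≤ (oddBelowThird n).card :=
      Finset.card_le_card_of_injOn (fun j => 2 * j + 1)
        (fun j hj => by
          simp only [Finset.coe_range, Set.mem_Iio] at hj
          simp only [Finset.mem_coe, mem_oddBelowThird]
          omega)
        (fun i _ j _ h => by simpa using h)

theorem card_image_natCast_oddBelowThird (n : ℕ) :
    ((oddBelowThird n).image (Nat.cast : ℕ → ZMod n)).card = (oddBelowThird n).card :=
  Finset.card_image_of_injOn fun a ha b hb h => by
    simp only [Finset.coe_filter, oddBelowThird, Finset.mem_range, Set.mem_ofPred_eq] at ha hb
    simpa [ZMod.val_cast_of_lt ha.1, ZMod.val_cast_of_lt hb.1] using congrArg ZMod.val h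

theorem three_free_odd_general (n : ℕ) (hn : 0 < n) :
    IsTFreeSet 3
      (↑(((Finset.range n).filter (fun k => k % 2 = 1 ∧ 3 * k < n)).image
          (fun (k : ℕ) => (k : ZMod n))) : Set (ZMod n)) ∧
    n / 6 ≤ (((Finset.range n).filter (fun k => k % 2 = 1 ∧ 3 * k < n)).image
          (fun (k : ℕ) => (k : ZMod n))).card :=
  ⟨isTFreeSet_three_oddBelowThird hn,
    card_image_natCast_oddBelowThird n ▸ div_six_le_card_oddBelowThird n⟩

theorem three_free_odd (n : ℕ) (hn : 0 < n) (hodd : Odd n) :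
    IsTFreeSet 3
      (↑(((Finset.range n).filter (fun k => k % 2 = 1 ∧ 3 * k < n)).image
          (fun (k : ℕ) => (k : ZMod n))) : Set (ZMod n)) ∧
    n / 6 ≤ (((Finset.range n).filter (fun k => k % 2 = 1 ∧ 3 * k < n)).image
          (fun (k : ℕ) => (k : ZMod n))).card :=
  three_free_odd_general n hn
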